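/- arXiv:2206.14345 — 2 statements merged into one kernel-verified Lean document; each statement's English description precedes it below -/
import Mathlib

section
/- The discriminant of the trinomial F(x) = x^7 + a x^5 + b is -b^4(7^7 b^2 + 2^2 · 5^5 · a^7). -/
open Polynomial

/-!
Let `s` be a square root of `-5a/7`, so that `F' = 7 X⁴ (X - s)(X + s)`. Multiplying
`F'(r) = 7 ∏ₜ (r - t)` over the seven roots `r` of `F` and exchanging the two products turns
`∏ᵣ F'(r)` into `7⁷ F(0)⁴ F(s) F(-s) = 7⁷ b⁴ (b² - s¹⁰ (s² + a)²)`, and `s² = -5a/7` makes this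
`b⁴ (7⁷ b² + 2² · 5⁵ · a⁷)`.
-/

namespace Polynomial

/-- The symmetry of the resultant of `p` and `∏ₜ (X - t)`. -/
theorem prod_roots_map_prod_sub_eq {R : Type*} [CommRing R] [IsDomain R] {p : R[X]}
    (hp : p.Monic) (hsplit : p.Splits) (m : Multiset R) :
    (p.roots.map fun r => (m.map fun t => r - t).prod).prod =
      (-1) ^ (p.natDegree * Multiset.card m) * (m.map p.eval).prod := by
  have hroot_sub : ∀ t, (p.roots.map fun r => r - t).prod = (-1) ^ p.natDegree * p.eval t := by
    intro t
    rw [hsplit.eval_eq_prod_roots_of_monic hp, hsplit.natDegree_eq_card_roots,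
      ← Multiset.card_map (t - ·), ← Multiset.prod_map_neg, Multiset.map_map]
    simp only [Function.comp_def, neg_sub]
  rw [Multiset.prod_map_prod_map, Multiset.map_congr rfl fun t _ => hroot_sub t,
    Multiset.prod_map_mul, Multiset.map_const', Multiset.prod_replicate, ← pow_mul, mul_comm]

end Polynomial

/-- The discriminant of `F(x) = x^7 + a x^5 + b`, defined as
`(-1)^(7·6/2)` times the resultant of `F` and `F'` (for monic `F`, this resultant
is the product of the values of `F'` at the roots of `F` in `ℂ`), equals
`-b^4 (7^7 b^2 + 2^2 · 5^5 · a^7)`. -/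
theorem disc_trinomial_x7_ax5_b (a b : ℤ)
    (F : Polynomial ℂ) (hF : F = X ^ 7 + C (a : ℂ) * X ^ 5 + C (b : ℂ)) :
    (-1 : ℂ) ^ (7 * 6 / 2) * ((F.roots).map (fun r => F.derivative.eval r)).prod =
      -(b : ℂ) ^ 4 * (7 ^ 7 * (b : ℂ) ^ 2 + 2 ^ 2 * 5 ^ 5 * (a : ℂ) ^ 7) := by
  have hmonic : F.Monic := by subst hF; monicity!
  have hdeg : F.natDegree = 7 := by subst hF; compute_degree!
  have hsplit : F.Splits := IsAlgClosed.splits F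
  have hcard : Multiset.card F.roots = 7 := by rw [← hsplit.natDegree_eq_card_roots, hdeg]
  have hF_eval : ∀ z : ℂ, F.eval z = z ^ 7 + a * z ^ 5 + b := fun z => by subst hF; simp
  have hF'_eval : ∀ z : ℂ, F.derivative.eval z = 7 * z ^ 6 + 5 * a * z ^ 4 := fun z => by
    simp only [hF, derivative_add, derivative_X_pow, derivative_C_mul_X_pow, derivative_C, eval_add,
      eval_mul, eval_C, eval_pow, eval_X, add_zero]
    ring
  obtain ⟨s, hs⟩ := IsAlgClosed.exists_pow_nat_eq (-5 * (a : ℂ) / 7) two_pos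
  have ha : (a : ℂ) = -7 * s ^ 2 / 5 := by rw [hs]; ring
  have hder : ∀ r : ℂ, F.derivative.eval r = 7 * (({0, 0, 0, 0, s, -s} : Multiset ℂ).map
      fun t => r - t).prod := fun r => by
    simp only [hF'_eval, ha, Multiset.insert_eq_cons, Multiset.map_cons, Multiset.prod_cons,
      Multiset.map_singleton, Multiset.prod_singleton]
    ring
  rw [Multiset.map_congr rfl fun r _ => hder r, Multiset.prod_map_mul, Multiset.map_const',
    Multiset.prod_replicate, hcard, prod_roots_map_prod_sub_eq hmonic hsplit, hdeg]
  simp only [Multiset.insert_eq_cons, Multiset.map_cons, Multiset.prod_cons, Multiset.card_cons,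
    Multiset.map_singleton, Multiset.prod_singleton, Multiset.card_singleton, hF_eval, ha]
  ring
end

section
/- Let K be a number field and p a rational prime. If the number of distinct prime ideals of the ring of integers of K lying above p with residue degree f exceeds the number of monic irreducible polynomials of degree f in 𝔽_p[x] for some positive integer f, then p divides the index (A_K : ℤ[η]) for every integral generator η of K. -/
/-!
If `p` does not divide the index of `ℤ[η]` in `A_K`, then it does not divide the exponent of the
conductor of `ℤ[η]` either, and the Kummer–Dedekind theorem matches the primes of `A_K` above `p`
bijectively with the monic irreducible factors of the minimal polynomial of `η` modulo `p`, a prime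
of residue degree `f` going to a factor of degree `f`. Hence `L_p(f) ≤ N_p(f)`.
-/

open NumberField Polynomial

theorem Polynomial.finite_setOf_natDegree_le (R : Type*) [Semiring R] [Finite R] (n : ℕ) :
    {g : R[X] | g.natDegree ≤ n}.Finite := by
  have : Finite (degreeLT R (n + 1)) := Finite.of_equiv _ (degreeLTEquiv R (n + 1)).toEquiv.symm
  refine Set.Finite.subset (Set.toFinite (degreeLT R (n + 1) : Set R[X])) fun g hg => ?_
  rw [SetLike.mem_coe, mem_degreeLT]
  exact (degree_le_natDegree.trans (WithBot.coe_le_coe.mpr hg)).trans_lt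
    (WithBot.coe_lt_coe.mpr n.lt_succ_self)

namespace RingOfIntegers

variable {K : Type*} [Field K]

theorem exponent_dvd_index (θ : 𝓞 K) :
    exponent θ ∣ (Algebra.adjoin ℤ {θ}).toSubring.toAddSubgroup.index := by
  have hmem : ((Algebra.adjoin ℤ {θ}).toSubring.toAddSubgroup.index : 𝓞 K) ∈ conductor ℤ θ :=
    mem_conductor_iff.mpr fun b => by
      simpa [nsmul_eq_mul] using
        (Algebra.adjoin ℤ {θ}).toSubring.toAddSubgroup.nsmul_index_mem b
  rw [← Int.cast_natCast, Int.cast_mem_ideal_iff] at hmem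
  exact_mod_cast hmem

end RingOfIntegers

open RingOfIntegers Ideal

namespace NumberField.Ideal

variable {K : Type*} [Field K] {θ : 𝓞 K} {p : ℕ} [Fact p.Prime]

theorem monic_and_irreducible_of_mem_monicFactorsMod {g : (ZMod p)[X]}
    (hg : g ∈ monicFactorsMod θ p) : g.Monic ∧ Irreducible g := by
  classical
  rw [Multiset.mem_toFinset, Polynomial.mem_normalizedFactors_iff
    (map_monic_ne_zero (minpoly.monic θ.isIntegral))] at hg
  exact ⟨hg.2.1, hg.1⟩

variable [NumberField K]

theorem natDegree_primesOverSpanEquivMonicFactorsMod (hp : ¬ p ∣ exponent θ)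
    (P : primesOver (span {(p : ℤ)}) (𝓞 K)) :
    (primesOverSpanEquivMonicFactorsMod hp P : (ZMod p)[X]).natDegree =
      (P : Ideal (𝓞 K)).inertiaDeg ℤ := by
  conv_rhs => rw [← (primesOverSpanEquivMonicFactorsMod hp).symm_apply_apply P]
  exact (inertiaDeg_primesOverSpanEquivMonicFactorsMod_symm_apply' hp _).symm

theorem card_primesOver_with_inertiaDeg_le_card_irreducible (hp : ¬ p ∣ exponent θ) (f : ℕ) :
    Nat.card {P : Ideal (𝓞 K) // P.IsMaximal ∧
        comap (algebraMap ℤ (𝓞 K)) P = span {(p : ℤ)} ∧ inertiaDeg' (span {(p : ℤ)}) P = f} ≤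
      Nat.card {g : (ZMod p)[X] // g.Monic ∧ Irreducible g ∧ g.natDegree = f} := by
  let e := primesOverSpanEquivMonicFactorsMod (K := K) hp
  have : Finite {g : (ZMod p)[X] // g.Monic ∧ Irreducible g ∧ g.natDegree = f} :=
    (finite_setOf_natDegree_le (ZMod p) f).subset (fun g hg => hg.2.2.le)
  refine Nat.card_le_card_of_injective
    (fun P => ⟨e ⟨P, ⟨P.2.1.isPrime, ⟨P.2.2.1.symm⟩⟩⟩, ?_⟩) fun P Q hPQ => ?_
  · obtain ⟨hmonic, hirr⟩ := monic_and_irreducible_of_mem_monicFactorsMod (e _).2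
    refine ⟨hmonic, hirr, ?_⟩
    have : P.1.IsMaximal := P.2.1
    have : P.1.LiesOver (span {(p : ℤ)}) := ⟨P.2.2.1.symm⟩
    rw [natDegree_primesOverSpanEquivMonicFactorsMod,
      ← inertiaDeg'_eq_inertiaDeg (span {(p : ℤ)}), P.2.2.2]
  · simp only [Subtype.mk.injEq, Subtype.val_inj, e.apply_eq_iff_eq] at hPQ
    exact Subtype.ext (Subtype.mk.inj hPQ)

end NumberField.Ideal

theorem dvd_index_of_more_primes_than_irreducibles_general
    (K : Type*) [Field K] [NumberField K] (p : ℕ) (hp : p.Prime) (f : ℕ)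
    (h : Nat.card {g : (ZMod p)[X] // g.Monic ∧ Irreducible g ∧ g.natDegree = f} <
      Nat.card {P : Ideal (𝓞 K) // P.IsMaximal ∧
        Ideal.comap (algebraMap ℤ (𝓞 K)) P = Ideal.span {(p : ℤ)} ∧
        Ideal.inertiaDeg' (Ideal.span {(p : ℤ)}) P = f}) :
    ∀ η : 𝓞 K, Algebra.adjoin ℚ {(η : K)} = ⊤ →
      p ∣ (Algebra.adjoin ℤ {η}).toSubring.toAddSubgroup.index := by
  have := Fact.mk hp
  intro η _
  by_contra hpn
  have hexp : ¬ p ∣ exponent η := fun hdvd => hpn (hdvd.trans (exponent_dvd_index η))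
  exact (card_primesOver_with_inertiaDeg_le_card_irreducible hexp f).not_gt h

/-- If the number `L_p(f)` of primes of `A_K` above `p` with residue degree `f` exceeds
the number `N_p(f)` of monic irreducible polynomials of degree `f` over `𝔽_p`, then `p`
divides the index `(A_K : ℤ[η])` of every integral generator `η` of `K`. -/
theorem dvd_index_of_more_primes_than_irreducibles
    (K : Type*) [Field K] [NumberField K] (p : ℕ) (hp : p.Prime) (f : ℕ) (hf : 0 < f)
    (h : Nat.card {g : (ZMod p)[X] // g.Monic ∧ Irreducible g ∧ g.natDegree = f} <
      Nat.card {P : Ideal (𝓞 K) // P.IsMaximal ∧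
        Ideal.comap (algebraMap ℤ (𝓞 K)) P = Ideal.span {(p : ℤ)} ∧
        Ideal.inertiaDeg' (Ideal.span {(p : ℤ)}) P = f}) :
    ∀ η : 𝓞 K, Algebra.adjoin ℚ {(η : K)} = ⊤ →
      p ∣ (Algebra.adjoin ℤ {η}).toSubring.toAddSubgroup.index :=
  dvd_index_of_more_primes_than_irreducibles_general K p hp f h
end
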